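/- arXiv:2103.09623 — 14 statements merged into one kernel-verified Lean document; each statement's English description precedes it below -/
import Mathlib

section
/- (Connectivity axiom, proved by Gupta) Let A, B, C, D be points in the Euclidean plane. If B lies strictly between A and D, and C lies strictly between A and D, and it is not the case that C lies strictly between B and D, and it is not the case that B lies strictly between C and D, then B = C. -/
open AffineMap

lemma lineMap_eq_aux (A D : EuclideanSpace ℝ (Fin 2)) (s : ℝ) :
    AffineMap.lineMap A D s = (1 - s) • (A -ᵥ D) +ᵥ D := by
  simp only [AffineMap.lineMap_apply, vsub_eq_sub, vadd_eq_add, sub_smul, one_smul, smul_sub]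
  abel

lemma wbtw_aux (A B C D : EuclideanSpace ℝ (Fin 2)) {t s : ℝ} (hts : t ≤ s) (hs : s ≤ 1)
    (hB : AffineMap.lineMap A D t = B) (hC : AffineMap.lineMap A D s = C) :
    Wbtw ℝ B C D := by
  rw [wbtw_comm, ← hB, ← hC, lineMap_eq_aux, lineMap_eq_aux]
  exact wbtw_smul_vadd_smul_vadd_of_nonneg_of_le D (A -ᵥ D) (by linarith) (by linarith)

theorem connectivity (A B C D : EuclideanSpace ℝ (Fin 2))
    (h1 : Sbtw ℝ A B D) (h2 : Sbtw ℝ A C D)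
    (h3 : ¬ Sbtw ℝ B C D) (h4 : ¬ Sbtw ℝ C B D) : B = C := by
  obtain ⟨t, ht, hB⟩ := h1.wbtw
  obtain ⟨s, hs, hC⟩ := h2.wbtw
  rcases le_total t s with hts | hts
  · have hw : Wbtw ℝ B C D := wbtw_aux A B C D hts hs.2 hB hC
    by_contra hne
    exact h3 ⟨hw, fun h => hne h.symm, h2.ne_right⟩
  · have hw : Wbtw ℝ C B D := wbtw_aux A C B D hts ht.2 hC hB
    by_contra hne
    exact h4 ⟨hw, hne, h1.ne_right⟩
end

section
/- (Circle-circle continuity) Let a, b be points of the Euclidean plane and r, s real numbers. If there exist points p and q with dist b p = s and dist b q = s such that dist a p < r and dist a q > r (so the circle of center b and radius s has a point inside and a point outside the circle of center a and radius r), then there exists a point x with dist a x = r and dist b x = s. -/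
theorem circle_circle_continuity (a b : EuclideanSpace ℝ (Fin 2)) (r s : ℝ)
    (h : ∃ p q : EuclideanSpace ℝ (Fin 2),
      dist b p = s ∧ dist b q = s ∧ dist a p < r ∧ dist a q > r) :
    ∃ x : EuclideanSpace ℝ (Fin 2), dist a x = r ∧ dist b x = s := by
  obtain ⟨p, q, hp, hq, hpr, hqr⟩ := h
  have hs : 0 ≤ s := hp ▸ dist_nonneg
  have hrank : 1 < Module.rank ℝ (EuclideanSpace ℝ (Fin 2)) := by
    have h2 : (Module.finrank ℝ (EuclideanSpace ℝ (Fin 2)) : Cardinal) = Module.rank ℝ (EuclideanSpace ℝ (Fin 2)) := Module.finrank_eq_rank ℝ _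
    rw [← h2, finrank_euclideanSpace_fin]; norm_num
  have hconn : IsConnected (Metric.sphere b s) := isConnected_sphere hrank b hs
  have hcont : ContinuousOn (fun x => dist a x) (Metric.sphere b s) :=
    (continuous_const.dist continuous_id).continuousOn
  have hmem : r ∈ (fun x => dist a x) '' Metric.sphere b s := by
    apply hconn.isPreconnected.intermediate_value
      (show p ∈ Metric.sphere b s from Metric.mem_sphere.mpr ((dist_comm p b).trans hp))
      (show q ∈ Metric.sphere b s from Metric.mem_sphere.mpr ((dist_comm q b).trans hq))
      hcont
    exact ⟨le_of_lt hpr, le_of_lt hqr⟩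
  obtain ⟨x, hx, hfx⟩ := hmem
  exact ⟨x, hfx, (dist_comm b x).trans (Metric.mem_sphere.mp hx)⟩
end

section
/- (Line-circle continuity) Let O, A, P be points of the Euclidean plane and r a real number. If dist O A < r (A is inside the circle of center O and radius r) and P ≠ A, then there exist two distinct points X and Y, both collinear with A and P, with dist O X = r and dist O Y = r, and such that A lies strictly between X and P. -/
/-!
Parametrize the line through `A` and `P` as `t ↦ AffineMap.lineMap A P t`. The distance from `O`
is continuous in `t`, smaller than `r` at `t = 0`, and at least `|t| * dist A P - dist O A`, so
it exceeds `r` for `|t|` large. The intermediate value theorem gives a parameter `s < 0` and a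
parameter `t > 0` at which it equals `r`; the corresponding points are distinct, and `A` (at
parameter `0`) lies strictly between the point at `s` and `P` (at parameter `1`).
-/

open AffineMap Set

section Affine

variable {k V P : Type*} [Field k] [AddCommGroup V] [Module k V] [AddTorsor V P]

theorem collinear_lineMap (A B : P) (t : k) : Collinear k {A, B, lineMap A B t} :=
  collinear_triple_of_mem_affineSpan_pair (left_mem_affineSpan_pair k A B)
    (right_mem_affineSpan_pair k A B) (lineMap_mem_affineSpan_pair t A B)

theorem sbtw_lineMap_of_neg [LinearOrder k] [IsStrictOrderedRing k] {A B : P} (hAB : A ≠ B)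
    {t : k} (ht : t < 0) : Sbtw k (lineMap A B t) A B := by
  simpa using (lineMap_injective k hAB).sbtw_map_iff.2 (Sbtw.of_lt_of_lt ht zero_lt_one)

end Affine

section Metric

variable {V P : Type*} [NormedAddCommGroup V] [NormedSpace ℝ V] [MetricSpace P]
  [NormedAddTorsor V P]

theorem abs_mul_dist_sub_dist_le_dist_lineMap (O A B : P) (t : ℝ) :
    |t| * dist A B - dist O A ≤ dist O (lineMap A B t) := by
  have h := dist_triangle (lineMap A B t) O A
  rw [dist_lineMap_left, Real.norm_eq_abs, dist_comm (lineMap A B t)] at h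
  linarith

theorem exists_neg_pos_dist_lineMap_eq {O A B : P} {r : ℝ} (hA : dist O A < r) (hAB : A ≠ B) :
    ∃ s : ℝ, s < 0 ∧ ∃ t : ℝ, 0 < t ∧ dist O (lineMap A B s) = r ∧ dist O (lineMap A B t) = r := by
  set f : ℝ → ℝ := fun t ↦ dist O (lineMap A B t)
  have hf : Continuous f := continuous_const.dist lineMap_continuous
  have hf0 : f 0 < r := by simpa [f] using hA
  set T := (r + dist O A) / dist A B
  have hT : 0 < T := div_pos (by linarith [dist_nonneg (x := O) (y := A)]) (dist_pos.2 hAB)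
  have hfT : ∀ t, |t| = T → r ≤ f t := fun t ht ↦ by
    have := abs_mul_dist_sub_dist_le_dist_lineMap O A B t
    rwa [ht, div_mul_cancel₀ _ (dist_ne_zero.2 hAB), add_sub_cancel_right] at this
  obtain ⟨s, ⟨-, hs⟩, hfs⟩ := intermediate_value_Ico' (neg_nonpos.2 hT.le) hf.continuousOn
    ⟨hf0, hfT (-T) (by rw [abs_neg, abs_of_pos hT])⟩
  obtain ⟨t, ⟨ht, -⟩, hft⟩ := intermediate_value_Ioc hT.le hf.continuousOn
    ⟨hf0, hfT T (abs_of_pos hT)⟩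
  exact ⟨s, hs, t, ht, hfs, hft⟩

end Metric

theorem line_circle_continuity (O A P : EuclideanSpace ℝ (Fin 2)) (r : ℝ)
    (hA : dist O A < r) (hPA : P ≠ A) :
    ∃ X Y : EuclideanSpace ℝ (Fin 2), X ≠ Y ∧
      Collinear ℝ ({A, P, X} : Set (EuclideanSpace ℝ (Fin 2))) ∧
      Collinear ℝ ({A, P, Y} : Set (EuclideanSpace ℝ (Fin 2))) ∧
      dist O X = r ∧ dist O Y = r ∧ Sbtw ℝ X A P := by
  obtain ⟨s, hs, t, ht, hX, hY⟩ := exists_neg_pos_dist_lineMap_eq hA hPA.symm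
  refine ⟨lineMap A P s, lineMap A P t, ?_, collinear_lineMap A P s, collinear_lineMap A P t,
    hX, hY, sbtw_lineMap_of_neg hPA.symm hs⟩
  exact (lineMap_injective ℝ hPA.symm).ne (hs.trans ht).ne
end

section
/- (Inner Pasch axiom, as a theorem of the Euclidean plane) For all points a, b, c, p, q: if p lies (nonstrictly) between a and c, and q lies (nonstrictly) between b and c, then there exists a point x lying (nonstrictly) between p and b and also (nonstrictly) between q and a. -/
theorem inner_pasch (a b c p q : EuclideanSpace ℝ (Fin 2))
    (h1 : Wbtw ℝ a p c) (h2 : Wbtw ℝ b q c) :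
    ∃ x : EuclideanSpace ℝ (Fin 2), Wbtw ℝ p x b ∧ Wbtw ℝ q x a := by
  obtain ⟨t, ⟨ht0, ht1⟩, hp⟩ := h1
  obtain ⟨s, ⟨hs0, hs1⟩, hq⟩ := h2
  by_cases hD : t + s - t * s = 0
  · -- then t = 0 and s = 0, so p = a, q = b; take x = a
    have ht : t = 0 := by nlinarith [mul_nonneg hs0 (sub_nonneg.2 ht1)]
    have hs : s = 0 := by nlinarith
    refine ⟨a, ?_, ?_⟩
    · rw [← hp, ht]
      simpa using wbtw_self_left ℝ a b
    · rw [← hq, hs]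
      simpa using wbtw_self_right ℝ b a
  · have hDpos : 0 < t + s - t * s := by
      rcases lt_or_eq_of_le (by nlinarith [mul_nonneg hs0 (sub_nonneg.2 ht1)] :
        (0:ℝ) ≤ t + s - t * s) with h | h
      · exact h
      · exact absurd h.symm hD
    set D : ℝ := t + s - t * s with hDdef
    set u : ℝ := t * (1 - s) / D with hu
    set v : ℝ := s * (1 - t) / D with hv
    refine ⟨AffineMap.lineMap p b u, ⟨u, ⟨?_, ?_⟩, rfl⟩, ⟨v, ⟨?_, ?_⟩, ?_⟩⟩
    · exact div_nonneg (mul_nonneg ht0 (by linarith)) hDpos.le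
    · rw [div_le_one hDpos]; nlinarith
    · exact div_nonneg (mul_nonneg hs0 (by linarith)) hDpos.le
    · rw [div_le_one hDpos]; nlinarith
    · subst hp hq
      simp only [AffineMap.lineMap_apply, vsub_eq_sub, vadd_eq_add, hu, hv]
      match_scalars <;> field_simp <;> ring
end

section
/- (Outer Pasch axiom, as a theorem of the Euclidean plane) For all points a, b, c, p, q: if p lies (nonstrictly) between a and c, and c lies (nonstrictly) between q and b, then there exists a point x such that x lies (nonstrictly) between a and q and p lies (nonstrictly) between x and b. -/
theorem outer_pasch (a b c p q : EuclideanSpace ℝ (Fin 2))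
    (h1 : Wbtw ℝ a p c) (h2 : Wbtw ℝ q c b) :
    ∃ x : EuclideanSpace ℝ (Fin 2), Wbtw ℝ a x q ∧ Wbtw ℝ x p b := by
  obtain ⟨t, ⟨ht0, ht1⟩, rfl⟩ := h1
  obtain ⟨s, ⟨hs0, hs1⟩, rfl⟩ := h2
  by_cases hts : t * s = 1
  · have ht : t = 1 := by nlinarith
    have hs : s = 1 := by nlinarith
    refine ⟨a, wbtw_self_left _ _ _, ?_⟩
    subst ht hs
    simp [AffineMap.lineMap_apply_one]
  · have hle : t * s ≤ 1 := by nlinarith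
    have h1ts : 0 < 1 - t * s := lt_of_le_of_ne (by linarith) (by
      intro h; exact hts (by linarith))
    refine ⟨AffineMap.lineMap a q (t * (1 - s) / (1 - t * s)),
      ⟨t * (1 - s) / (1 - t * s), ⟨?_, ?_⟩, rfl⟩,
      ⟨t * s, ⟨by positivity, hle⟩, ?_⟩⟩
    · exact div_nonneg (by nlinarith) (le_of_lt h1ts)
    · rw [div_le_one h1ts]; nlinarith
    · simp only [AffineMap.lineMap_apply_module]
      match_scalars <;> field_simp <;> ring
end

section
/- (Euclid I.16, exterior angle inequality, corrected using Pasch) Let A, B, C be noncollinear points in the Euclidean plane and let D be a point with C strictly between B and D. Then the exterior angle ∠ A C D is strictly greater than the interior and opposite angle ∠ B A C, and also strictly greater than ∠ A B C. -/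
open EuclideanGeometry

theorem euclid_I_16 (A B C D : EuclideanSpace ℝ (Fin 2))
    (hncol : ¬ Collinear ℝ ({A, B, C} : Set (EuclideanSpace ℝ (Fin 2))))
    (hD : Sbtw ℝ B C D) :
    ∠ B A C < ∠ A C D ∧ ∠ A B C < ∠ A C D := by
  have hext : ∠ A C D = ∠ B A C + ∠ A B C := by
    rw [exterior_angle_eq_angle_add_angle (p₃ := A) D hD.symm, angle_comm C A B]
  have hA : 0 < ∠ B A C := angle_pos_of_not_collinear (by rwa [Set.insert_comm])
  have hB : 0 < ∠ A B C := angle_pos_of_not_collinear hncol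
  constructor <;> linarith
end

section
/- (Tarski's five-segment axiom, as a theorem of the Euclidean plane, with strict betweenness) Let a, b, c, d and A, B, C, D be points with b strictly between a and c and B strictly between A and C. If dist a b = dist A B, dist b c = dist B C, dist a d = dist A D, and dist b d = dist B D, then dist c d = dist C D. -/
open RealInnerProductSpace

lemma five_aux (a b c d : EuclideanSpace ℝ (Fin 2)) (k : ℝ)
    (hk : c - b = k • (b - a)) :
    dist c d ^ 2 = dist b c ^ 2 + dist b d ^ 2
      + k * (dist a b ^ 2 + dist b d ^ 2 - dist a d ^ 2) := by
  have key : ⟪b - a, b - d⟫ = (‖b - a‖ ^ 2 + ‖b - d‖ ^ 2 - ‖a - d‖ ^ 2) / 2 := by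
    have h : a - d = (b - d) - (b - a) := by abel
    have := @norm_sub_sq_real (EuclideanSpace ℝ (Fin 2)) _ _ (b - d) (b - a)
    rw [← h, real_inner_comm] at this
    linarith
  have hcd : c - d = (k • (b - a)) + (b - d) := by
    rw [← hk]; abel
  have expand : ‖c - d‖ ^ 2 = ‖k • (b - a)‖ ^ 2 + 2 * (k * ⟪b - a, b - d⟫) + ‖b - d‖ ^ 2 := by
    rw [hcd, @norm_add_sq_real, real_inner_smul_left]
  have hbc : ‖c - b‖ ^ 2 = ‖k • (b - a)‖ ^ 2 := by rw [hk]
  simp only [dist_eq_norm]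
  have e1 : ‖b - c‖ = ‖c - b‖ := norm_sub_rev _ _
  rw [e1, hbc]
  rw [expand, key, norm_sub_rev a b]
  ring

theorem five_segment (a b c d A B C D : EuclideanSpace ℝ (Fin 2))
    (hb : Sbtw ℝ a b c) (hB : Sbtw ℝ A B C)
    (h1 : dist a b = dist A B) (h2 : dist b c = dist B C)
    (h3 : dist a d = dist A D) (h4 : dist b d = dist B D) :
    dist c d = dist C D := by
  -- get positive scalar k with c - b = k • (b - a)
  have get : ∀ x y z : EuclideanSpace ℝ (Fin 2), Sbtw ℝ x y z →
      ∃ k : ℝ, 0 < k ∧ z - y = k • (y - x) := by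
    intro x y z h
    have hray : SameRay ℝ (y - x) (z - y) := by
      have := h.wbtw
      rw [wbtw_iff_sameRay_vsub] at this
      simpa using this
    have hu : (y - x) ≠ 0 := sub_ne_zero.mpr h.ne_left
    have hv : (z - y) ≠ 0 := sub_ne_zero.mpr (Ne.symm h.ne_right)
    obtain ⟨r₁, r₂, hr₁, hr₂, hre⟩ := hray.exists_pos hu hv
    refine ⟨r₁ / r₂, div_pos hr₁ hr₂, ?_⟩
    have : (r₁ / r₂) • (y - x) = r₂⁻¹ • (r₁ • (y - x)) := by
      rw [smul_smul]; ring_nf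
    rw [this, hre, smul_smul, inv_mul_cancel₀ hr₂.ne', one_smul]
  obtain ⟨k, hkpos, hk⟩ := get a b c hb
  obtain ⟨K, hKpos, hK⟩ := get A B C hB
  -- k = K
  have hnab : dist a b ≠ 0 := dist_ne_zero.mpr hb.left_ne
  have hkk : k * dist a b = dist b c := by
    rw [dist_eq_norm, dist_eq_norm, norm_sub_rev b c, hk, norm_smul,
      Real.norm_eq_abs, abs_of_pos hkpos, norm_sub_rev b a]
  have hKK : K * dist A B = dist B C := by
    rw [dist_eq_norm, dist_eq_norm, norm_sub_rev B C, hK, norm_smul,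
      Real.norm_eq_abs, abs_of_pos hKpos, norm_sub_rev B A]
  have hkK : k = K := by
    have : k * dist a b = K * dist a b := by rw [hkk, h1, hKK, h2]
    exact mul_right_cancel₀ hnab this
  have e1 := five_aux a b c d k hk
  have e2 := five_aux A B C D K hK
  have : dist c d ^ 2 = dist C D ^ 2 := by
    rw [e1, e2, h1, h2, h3, h4, hkK]
  nlinarith [dist_nonneg (x := c) (y := d), dist_nonneg (x := C) (y := D)]
end

section
/- (Euclid I.7, triangle uniqueness, corrected using the same-side hypothesis) Let A ≠ B be points of the Euclidean plane and let C, D be points lying on the same side of the line AB. If dist A C = dist A D and dist B C = dist B D, then C = D. -/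
/-- Tarski: `a` and `b` are on opposite sides of the line through `p` and `q`:
there is a point `t` collinear with `p, q` strictly between `a` and `b`. -/
def OppSide (p q a b : EuclideanSpace ℝ (Fin 2)) : Prop :=
  ∃ t : EuclideanSpace ℝ (Fin 2),
    Collinear ℝ ({p, q, t} : Set (EuclideanSpace ℝ (Fin 2))) ∧ Sbtw ℝ a t b

/-- Tarski: `a` and `b` are on the same side of the line through `p` and `q`:
both are on the opposite side of the line from some common point `c`. -/
def SameSide (p q a b : EuclideanSpace ℝ (Fin 2)) : Prop :=
  ∃ c : EuclideanSpace ℝ (Fin 2), OppSide p q a c ∧ OppSide p q b c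

theorem euclid_I_7 (A B C D : EuclideanSpace ℝ (Fin 2)) (hAB : A ≠ B)
    (hside : SameSide A B C D)
    (h1 : dist A C = dist A D) (h2 : dist B C = dist B D) :
    C = D := by
  by_contra hCD
  -- `s` is the perpendicular bisector of `C D`; it contains `A` and `B`.
  set s : AffineSubspace ℝ (EuclideanSpace ℝ (Fin 2)) := AffineSubspace.perpBisector C D with hs
  have hA : A ∈ s := AffineSubspace.mem_perpBisector_iff_dist_eq.2 h1
  have hB : B ∈ s := AffineSubspace.mem_perpBisector_iff_dist_eq.2 h2
  have hCs : C ∉ s := by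
    intro h
    exact hCD (by simpa using (AffineSubspace.mem_perpBisector_iff_dist_eq.1 h))
  have hDs : D ∉ s := by
    intro h
    have := AffineSubspace.mem_perpBisector_iff_dist_eq.1 h
    rw [dist_self, dist_comm D C] at this
    exact hCD (dist_eq_zero.1 this)
  -- `C` and `D` are strictly on opposite sides of `s` (the midpoint lies on `s`).
  have hM : midpoint ℝ C D ∈ s := AffineSubspace.midpoint_mem_perpBisector C D
  have hopp : s.SOppSide C D :=
    ⟨(wbtw_midpoint ℝ C D).wOppSide₁₃ hM, hCs, hDs⟩
  -- From the same-side hypothesis, derive `s.WSameSide C D`.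
  obtain ⟨c, ⟨t₁, hcol₁, hbtw₁⟩, ⟨t₂, hcol₂, hbtw₂⟩⟩ := hside
  have hspan : affineSpan ℝ ({A, B} : Set (EuclideanSpace ℝ (Fin 2))) ≤ s := by
    apply affineSpan_le.2
    rintro x (rfl | rfl) <;> assumption
  have ht₁ : t₁ ∈ s := hspan (hcol₁.mem_affineSpan_of_mem_of_ne
    (Set.mem_insert _ _) (Set.mem_insert_of_mem _ (Set.mem_insert _ _))
    (Set.mem_insert_of_mem _ (Set.mem_insert_of_mem _ rfl)) hAB)
  have ht₂ : t₂ ∈ s := hspan (hcol₂.mem_affineSpan_of_mem_of_ne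
    (Set.mem_insert _ _) (Set.mem_insert_of_mem _ (Set.mem_insert _ _))
    (Set.mem_insert_of_mem _ (Set.mem_insert_of_mem _ rfl)) hAB)
  have hcs : c ∉ s := by
    intro hc
    apply hCs
    have hline : affineSpan ℝ ({t₁, c} : Set (EuclideanSpace ℝ (Fin 2))) ≤ s := by
      apply affineSpan_le.2
      rintro x (rfl | rfl) <;> assumption
    exact hline (hbtw₁.wbtw.collinear.mem_affineSpan_of_mem_of_ne
      (Set.mem_insert_of_mem _ (Set.mem_insert _ _))
      (Set.mem_insert_of_mem _ (Set.mem_insert_of_mem _ rfl))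
      (Set.mem_insert _ _) hbtw₁.ne_right)
  have hw1 : s.WOppSide C c := hbtw₁.wbtw.wOppSide₁₃ ht₁
  have hw2 : s.WOppSide c D := (hbtw₂.wbtw.wOppSide₁₃ ht₂).symm
  exact hopp.not_wSameSide (hw1.trans hw2 hcs)
end

section
/- (Crossbar theorem) Let A, B, C be noncollinear points of the Euclidean plane. Suppose P lies in the interior of angle ABC, i.e., there are points U ≠ B on ray BA and V ≠ B on ray BC with P strictly between U and V. Let J ≠ B be any point on ray BA and K ≠ B any point on ray BC. Then there exists a point X lying (nonstrictly) between J and K such that X lies on the ray from B through P (i.e., X − B and P − B point in the same direction). -/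
theorem crossbar (A B C P U V J K : EuclideanSpace ℝ (Fin 2))
    (hncol : ¬ Collinear ℝ ({A, B, C} : Set (EuclideanSpace ℝ (Fin 2))))
    (hU : U ≠ B) (hUray : SameRay ℝ (U - B) (A - B))
    (hV : V ≠ B) (hVray : SameRay ℝ (V - B) (C - B))
    (hP : Sbtw ℝ U P V)
    (hJ : J ≠ B) (hJray : SameRay ℝ (J - B) (A - B))
    (hK : K ≠ B) (hKray : SameRay ℝ (K - B) (C - B)) :
    ∃ X : EuclideanSpace ℝ (Fin 2), Wbtw ℝ J X K ∧ SameRay ℝ (X - B) (P - B) := by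
  have hAB : A ≠ B := by
    rintro rfl
    exact hncol (by simpa [Set.insert_comm, Set.insert_idem] using collinear_pair ℝ A C)
  have hCB : C ≠ B := by
    rintro rfl
    exact hncol (by simpa [Set.insert_idem] using collinear_pair ℝ A C)
  have hAB' : A - B ≠ 0 := sub_ne_zero.2 hAB
  have hCB' : C - B ≠ 0 := sub_ne_zero.2 hCB
  obtain ⟨u, hu, hUeq⟩ := hUray.symm.exists_pos_left hAB' (sub_ne_zero.2 hU)
  obtain ⟨v, hv, hVeq⟩ := hVray.symm.exists_pos_left hCB' (sub_ne_zero.2 hV)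
  obtain ⟨j, hj, hJeq⟩ := hJray.symm.exists_pos_left hAB' (sub_ne_zero.2 hJ)
  obtain ⟨k, hk, hKeq⟩ := hKray.symm.exists_pos_left hCB' (sub_ne_zero.2 hK)
  obtain ⟨t, ⟨ht0, ht1⟩, hPt⟩ := hP.mem_image_Ioo
  set a := A - B with ha
  set c := C - B with hc
  have h1 : P - B = (1 - t) • (U - B) + t • (V - B) := by
    rw [← hPt]
    simp only [AffineMap.lineMap_apply, vsub_eq_sub, vadd_eq_add]
    module
  rw [← hUeq, ← hVeq, smul_smul, smul_smul] at h1
  have hPB : P - B = ((1 - t) * u) • a + (t * v) • c := h1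
  set α : ℝ := (1 - t) * u with hα
  set β : ℝ := t * v with hβ
  have hαpos : 0 < α := mul_pos (by linarith) hu
  have hβpos : 0 < β := mul_pos ht0 hv
  set D : ℝ := k * α + j * β with hD
  have hDpos : 0 < D := by positivity
  refine ⟨B + (j * k / D) • (P - B), ⟨j * β / D, ⟨by positivity, ?_⟩, ?_⟩, ?_⟩
  · rw [div_le_one hDpos]; nlinarith
  · rw [AffineMap.lineMap_apply_module]
    have hJB : J = B + j • a := by rw [hJeq]; abel
    have hKB : K = B + k • c := by rw [hKeq]; abel
    have hDne : D ≠ 0 := ne_of_gt hDpos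
    rw [hJB, hKB, hPB]
    match_scalars <;> field_simp <;> ring
  · have : B + (j * k / D) • (P - B) - B = (j * k / D) • (P - B) := by abel
    rw [this]
    exact SameRay.sameRay_nonneg_smul_left _ (by positivity)
end

section
/- (Plane separation theorem) Let p ≠ q be points of the Euclidean plane, and let C, D, E be points none of which is collinear with p and q. If C and D are on the same side of the line pq, and D and E are on opposite sides of the line pq, then C and E are on opposite sides of the line pq. -/
theorem collinear_triple_iff_mem_affineSpan_pair {k V P : Type*} [DivisionRing k]
    [AddCommGroup V] [Module k V] [AddTorsor V P] {p₁ p₂ p₃ : P} (h : p₁ ≠ p₂) :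
    Collinear k ({p₁, p₂, p₃} : Set P) ↔ p₃ ∈ line[k, p₁, p₂] :=
  ⟨fun hcol => hcol.mem_affineSpan_of_mem_of_ne (by simp) (by simp) (by simp) h,
    collinear_triple_of_mem_affineSpan_pair (left_mem_affineSpan_pair k p₁ p₂)
      (right_mem_affineSpan_pair k p₁ p₂)⟩

namespace OppSide

variable {p q a b : EuclideanSpace ℝ (Fin 2)}

theorem symm (h : OppSide p q a b) : OppSide p q b a :=
  let ⟨t, ht, hbtw⟩ := h
  ⟨t, ht, hbtw.symm⟩

theorem sOppSide (h : OppSide p q a b) (hpq : p ≠ q) (ha : a ∉ line[ℝ, p, q]) :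
    line[ℝ, p, q].SOppSide a b :=
  let ⟨_, ht, hbtw⟩ := h
  hbtw.sOppSide_of_notMem_of_mem ha ((collinear_triple_iff_mem_affineSpan_pair hpq).1 ht)

end OppSide

theorem AffineSubspace.SOppSide.oppSide {p q a b : EuclideanSpace ℝ (Fin 2)}
    (h : line[ℝ, p, q].SOppSide a b) : OppSide p q a b :=
  let ⟨t, ht, hbtw⟩ := h.exists_sbtw
  ⟨t, collinear_triple_of_mem_affineSpan_pair (left_mem_affineSpan_pair ℝ p q)
    (right_mem_affineSpan_pair ℝ p q) ht, hbtw⟩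

theorem plane_separation_general (p q C D E : EuclideanSpace ℝ (Fin 2))
    (hC : ¬ Collinear ℝ ({p, q, C} : Set (EuclideanSpace ℝ (Fin 2))))
    (hCD : SameSide p q C D) (hDE : OppSide p q D E) :
    OppSide p q C E := by
  have hpq : p ≠ q := ne₁₂_of_not_collinear hC
  obtain ⟨c, hCc, hDc⟩ := hCD
  have hCc := hCc.sOppSide hpq (mt (collinear_triple_iff_mem_affineSpan_pair hpq).2 hC)
  have hcD := hDc.symm.sOppSide hpq hCc.right_notMem
  have hDE := hDE.sOppSide hpq hcD.right_notMem
  exact ((hCc.trans hcD).trans_sOppSide hDE).oppSide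

theorem plane_separation (p q C D E : EuclideanSpace ℝ (Fin 2)) (hpq : p ≠ q)
    (hC : ¬ Collinear ℝ ({p, q, C} : Set (EuclideanSpace ℝ (Fin 2))))
    (hD : ¬ Collinear ℝ ({p, q, D} : Set (EuclideanSpace ℝ (Fin 2))))
    (hE : ¬ Collinear ℝ ({p, q, E} : Set (EuclideanSpace ℝ (Fin 2))))
    (hCD : SameSide p q C D) (hDE : OppSide p q D E) :
    OppSide p q C E :=
  plane_separation_general p q C D E hC hCD hDE
end

section
/- (Euclid I.9, existence of the angle bisector, via Proclus's corrected proof) Let p, q, r be noncollinear points of the Euclidean plane. Then there exists a point f ≠ q such that ∠ p q f = ∠ f q r and ∠ p q f + ∠ f q r = ∠ p q r (so the ray qf bisects angle pqr and lies in its interior). -/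
open EuclideanGeometry Real InnerProductGeometry

open scoped RealInnerProductSpace

lemma bisect_vec {V : Type*} [NormedAddCommGroup V] [InnerProductSpace ℝ V]
    {u v : V} (hu : ‖u‖ = 1) (hv : ‖v‖ = 1)
    (hc1 : ⟪u, v⟫ < 1) (hc2 : -1 < ⟪u, v⟫) :
    InnerProductGeometry.angle u (u + v) = InnerProductGeometry.angle (u + v) v ∧
    InnerProductGeometry.angle u (u + v) + InnerProductGeometry.angle (u + v) v
      = InnerProductGeometry.angle u v := by
  set c : ℝ := ⟪u, v⟫ with hc
  have hn2 : ‖u + v‖ ^ 2 = 2 + 2 * c := by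
    rw [norm_add_sq_real, hu, hv, hc]; ring
  have hcpos : (0:ℝ) < 1 + c := by linarith
  have hnpos : 0 < ‖u + v‖ := by
    by_contra h
    push_neg at h
    have : ‖u + v‖ = 0 := le_antisymm h (norm_nonneg _)
    rw [this] at hn2
    nlinarith
  set n : ℝ := ‖u + v‖ with hn
  have hiu : ⟪u, u + v⟫ = 1 + c := by
    rw [inner_add_right, real_inner_self_eq_norm_sq, hu, hc]; ring
  have hiv : ⟪u + v, v⟫ = 1 + c := by
    rw [inner_add_left, real_inner_self_eq_norm_sq, hv, hc]; ring
  set x : ℝ := (1 + c) / n with hx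
  have hx0 : 0 ≤ x := le_of_lt (div_pos hcpos hnpos)
  have hx1 : x ≤ 1 := by
    rw [hx, div_le_one hnpos]
    nlinarith
  have ha1 : InnerProductGeometry.angle u (u + v) = Real.arccos x := by
    rw [InnerProductGeometry.angle, hiu, hu, hx, one_mul]
  have ha2 : InnerProductGeometry.angle (u + v) v = Real.arccos x := by
    rw [InnerProductGeometry.angle, hiv, hv, hx, mul_one]
  refine ⟨ha1.trans ha2.symm, ?_⟩
  rw [ha1, ha2, InnerProductGeometry.angle, hu, hv, ← hc]
  simp only [one_mul, div_one]
  have hcos : Real.cos (Real.arccos x + Real.arccos x) = c := by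
    rw [← two_mul, Real.cos_two_mul, Real.cos_arccos (by linarith) hx1]
    rw [hx]
    field_simp
    nlinarith
  rw [← hcos, Real.arccos_cos]
  · linarith [Real.arccos_nonneg x]
  · have : Real.arccos x ≤ π / 2 := (Real.arccos_le_pi_div_two).mpr hx0
    linarith

theorem euclid_I_9 (p q r : EuclideanSpace ℝ (Fin 2))
    (hncol : ¬ Collinear ℝ ({p, q, r} : Set (EuclideanSpace ℝ (Fin 2)))) :
    ∃ f : EuclideanSpace ℝ (Fin 2), f ≠ q ∧
      ∠ p q f = ∠ f q r ∧ ∠ p q f + ∠ f q r = ∠ p q r := by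
  have hpq : p ≠ q := by
    rintro rfl
    exact hncol (by simpa using collinear_pair ℝ p r)
  have hrq : r ≠ q := by
    rintro rfl
    exact hncol (by simp [Set.insert_comm, Set.pair_comm]; exact collinear_pair ℝ r p)
  set a : EuclideanSpace ℝ (Fin 2) := p -ᵥ q with ha
  set b : EuclideanSpace ℝ (Fin 2) := r -ᵥ q with hb
  have ha0 : a ≠ 0 := vsub_ne_zero.mpr hpq
  have hb0 : b ≠ 0 := vsub_ne_zero.mpr hrq
  have hna : 0 < ‖a‖ := norm_pos_iff.mpr ha0
  have hnb : 0 < ‖b‖ := norm_pos_iff.mpr hb0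
  set u : EuclideanSpace ℝ (Fin 2) := ‖a‖⁻¹ • a with hu
  set v : EuclideanSpace ℝ (Fin 2) := ‖b‖⁻¹ • b with hv
  have hun : ‖u‖ = 1 := by
    rw [hu, norm_smul, norm_inv, norm_norm, inv_mul_cancel₀ hna.ne']
  have hvn : ‖v‖ = 1 := by
    rw [hv, norm_smul, norm_inv, norm_norm, inv_mul_cancel₀ hnb.ne']
  have hanguv : InnerProductGeometry.angle u v = ∠ p q r := by
    rw [EuclideanGeometry.angle, hu, hv,
      InnerProductGeometry.angle_smul_left_of_pos _ _ (inv_pos.mpr hna),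
      InnerProductGeometry.angle_smul_right_of_pos _ _ (inv_pos.mpr hnb)]
  have hpos : 0 < ∠ p q r := EuclideanGeometry.angle_pos_of_not_collinear hncol
  have hlt : ∠ p q r < π := EuclideanGeometry.angle_lt_pi_of_not_collinear hncol
  have harc : InnerProductGeometry.angle u v = Real.arccos ⟪u, v⟫ := by
    rw [InnerProductGeometry.angle, hun, hvn, one_mul, div_one]
  have hc1 : ⟪u, v⟫ < 1 := by
    rw [← Real.arccos_pos, ← harc, hanguv]; exact hpos
  have hge : -1 ≤ ⟪u, v⟫ := by
    have h := abs_real_inner_le_norm u v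
    rw [hun, hvn, one_mul] at h
    linarith [neg_abs_le (⟪u, v⟫ : ℝ)]
  have hc2 : -1 < ⟪u, v⟫ := by
    refine lt_of_le_of_ne hge fun h => ?_
    rw [← h, Real.arccos_neg_one, hanguv] at harc
    exact absurd harc.symm (ne_of_gt hlt)
  obtain ⟨heq, hsum⟩ := bisect_vec hun hvn hc1 hc2
  have huv0 : u + v ≠ 0 := by
    intro h
    have h2 : ‖u + v‖ ^ 2 = 2 + 2 * ⟪u, v⟫ := by
      rw [norm_add_sq_real, hun, hvn]; ring
    rw [h, norm_zero] at h2
    nlinarith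
  refine ⟨(u + v) +ᵥ q, ?_, ?_, ?_⟩
  · intro h
    exact huv0 (by simpa using congrArg (· -ᵥ q) h)
  · have h1 : ∠ p q ((u + v) +ᵥ q) = InnerProductGeometry.angle u (u + v) := by
      rw [EuclideanGeometry.angle, vadd_vsub, ← ha, hu,
        InnerProductGeometry.angle_smul_left_of_pos _ _ (inv_pos.mpr hna)]
    have h2 : ∠ ((u + v) +ᵥ q) q r = InnerProductGeometry.angle (u + v) v := by
      rw [EuclideanGeometry.angle, vadd_vsub, ← hb, hv,
        InnerProductGeometry.angle_smul_right_of_pos _ _ (inv_pos.mpr hnb)]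
    rw [h1, h2, heq]
  · have h1 : ∠ p q ((u + v) +ᵥ q) = InnerProductGeometry.angle u (u + v) := by
      rw [EuclideanGeometry.angle, vadd_vsub, ← ha, hu,
        InnerProductGeometry.angle_smul_left_of_pos _ _ (inv_pos.mpr hna)]
    have h2 : ∠ ((u + v) +ᵥ q) q r = InnerProductGeometry.angle (u + v) v := by
      rw [EuclideanGeometry.angle, vadd_vsub, ← hb, hv,
        InnerProductGeometry.angle_smul_right_of_pos _ _ (inv_pos.mpr hnb)]
    rw [h1, h2, hsum, hanguv]
end

section
/- (Uniqueness of the angle bisector) Let p, q, r be noncollinear points of the Euclidean plane, and let a ≠ q and b ≠ q be points with ∠ p q a = ∠ a q r and ∠ p q a + ∠ a q r = ∠ p q r, and ∠ p q b = ∠ b q r and ∠ p q b + ∠ b q r = ∠ p q r. Then a and b lie on the same ray from q, i.e., SameRay ℝ (a − q) (b − q). -/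
/-!
Orient the plane. A bisector `u` of the angle between `x` and `y` splits `∡ x y` into two halves
of equal size; they also have the same orientation, since otherwise they cancel and the angle is
zero. Thus `∡ x y = 2 • ∡ x u`, and because `∠ x u < π / 2` the doubling preserves the sign. Two
bisectors `u`, `v` therefore give oriented angles `∡ x u`, `∡ x v` of equal size and sign, hence
equal, so `∡ u v = 0`.
-/

namespace Orientation

open InnerProductGeometry

variable {V : Type*} [NormedAddCommGroup V] [InnerProductSpace ℝ V] [Fact (Module.finrank ℝ V = 2)]
  (o : Orientation ℝ V (Fin 2)) {x y u : V}

theorem oangle_eq_two_nsmul_oangle_of_angle_eq_of_angle_add_angle_eq (hx : x ≠ 0) (hy : y ≠ 0)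
    (hu : u ≠ 0) (h : angle x u = angle u y) (hsum : angle x u + angle u y = angle x y) :
    o.oangle x y = (2 : ℕ) • o.oangle x u := by
  have hadd := o.oangle_add hx hu hy
  -- if the two halves had opposite orientations they would cancel, so `angle x y = 0`
  have hcancel : o.oangle x u + o.oangle u y = 0 → o.oangle u y = o.oangle x u := fun h0 ↦ by
    have hxy : angle x y = 0 := (o.oangle_eq_zero_iff_angle_eq_zero hx hy).1 (hadd ▸ h0)
    rw [(o.oangle_eq_zero_iff_angle_eq_zero hu hy).2 (by linarith),
      (o.oangle_eq_zero_iff_angle_eq_zero hx hu).2 (by linarith)]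
  have halves : o.oangle u y = o.oangle x u := by
    rcases o.oangle_eq_angle_or_eq_neg_angle hx hu with hxu | hxu <;>
      rcases o.oangle_eq_angle_or_eq_neg_angle hu hy with huy | huy
    · rw [hxu, huy, h]
    · exact hcancel (by rw [hxu, huy, h, add_neg_cancel])
    · exact hcancel (by rw [hxu, huy, h, neg_add_cancel])
    · rw [hxu, huy, h]
  rw [← hadd, halves, two_nsmul]

theorem oangle_sign_eq_of_angle_eq_of_angle_add_angle_eq (hx : x ≠ 0) (hy : y ≠ 0)
    (hu : u ≠ 0) (h : angle x u = angle u y) (hsum : angle x u + angle u y = angle x y)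
    (hpi : angle x y ≠ Real.pi) : (o.oangle x u).sign = (o.oangle x y).sign := by
  rw [o.oangle_eq_two_nsmul_oangle_of_angle_eq_of_angle_add_angle_eq hx hy hu h hsum]
  refine (Real.Angle.sign_two_nsmul_eq_sign_iff.2 (Or.inr ?_)).symm
  rw [← o.angle_eq_abs_oangle_toReal hx hu]
  linarith [(angle_le_pi x y).lt_of_ne hpi]

end Orientation

namespace InnerProductGeometry

variable {V : Type*} [NormedAddCommGroup V] [InnerProductSpace ℝ V] [Fact (Module.finrank ℝ V = 2)]

theorem sameRay_of_angle_eq_of_angle_add_angle_eq {x y u v : V} (hx : x ≠ 0) (hy : y ≠ 0)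
    (hu : u ≠ 0) (hv : v ≠ 0) (hpi : angle x y ≠ Real.pi)
    (hu₁ : angle x u = angle u y) (hu₂ : angle x u + angle u y = angle x y)
    (hv₁ : angle x v = angle v y) (hv₂ : angle x v + angle v y = angle x y) :
    SameRay ℝ u v := by
  have : FiniteDimensional ℝ V := .of_fact_finrank_eq_two
  let o : Orientation ℝ V (Fin 2) := (Module.finBasisOfFinrankEq ℝ V Fact.out).orientation
  have hxuv : o.oangle x u = o.oangle x v := o.oangle_eq_of_angle_eq_of_sign_eq (by linarith) <| by
    rw [o.oangle_sign_eq_of_angle_eq_of_angle_add_angle_eq hx hy hu hu₁ hu₂ hpi,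
      o.oangle_sign_eq_of_angle_eq_of_angle_add_angle_eq hx hy hv hv₁ hv₂ hpi]
  rw [← o.oangle_eq_zero_iff_sameRay, ← o.oangle_sub_left hx hu hv, hxuv, sub_self]

end InnerProductGeometry

open EuclideanGeometry

theorem angle_bisector_unique (p q r a b : EuclideanSpace ℝ (Fin 2))
    (hncol : ¬ Collinear ℝ ({p, q, r} : Set (EuclideanSpace ℝ (Fin 2))))
    (ha : a ≠ q) (hb : b ≠ q)
    (ha1 : ∠ p q a = ∠ a q r) (ha2 : ∠ p q a + ∠ a q r = ∠ p q r)
    (hb1 : ∠ p q b = ∠ b q r) (hb2 : ∠ p q b + ∠ b q r = ∠ p q r) :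
    SameRay ℝ (a - q) (b - q) := by
  have : Fact (Module.finrank ℝ (EuclideanSpace ℝ (Fin 2)) = 2) := ⟨finrank_euclideanSpace_fin⟩
  have hpq : p ≠ q := ne₁₂_of_not_collinear hncol
  have hrq : r ≠ q := (ne₂₃_of_not_collinear hncol).symm
  exact InnerProductGeometry.sameRay_of_angle_eq_of_angle_add_angle_eq (vsub_ne_zero.2 hpq)
    (vsub_ne_zero.2 hrq) (vsub_ne_zero.2 ha) (vsub_ne_zero.2 hb)
    (angle_ne_pi_of_not_collinear hncol) ha1 ha2 hb1 hb2
end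

section
/- (Euclid I.27, with the paper's segment-based encoding of equal alternate interior angles) Let p, q, r, s, t be points of the Euclidean plane with p, q, r noncollinear, t strictly between p and q with dist p t = dist t q, and t strictly between r and s with dist r t = dist t s. Then the line through p and r and the line through q and s do not meet: there is no point x with x, p, r collinear and x, q, s collinear. -/
private lemma collinear_image_affine {E : Type*} [NormedAddCommGroup E] [NormedSpace ℝ E]
    (f : E →ᵃ[ℝ] E) {s : Set E} (h : Collinear ℝ s) : Collinear ℝ (f '' s) := by
  rw [collinear_iff_exists_forall_eq_smul_vadd] at h ⊢
  obtain ⟨p₀, v, hv⟩ := h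
  refine ⟨f p₀, f.linear v, ?_⟩
  rintro _ ⟨p, hp, rfl⟩
  obtain ⟨c, rfl⟩ := hv p hp
  refine ⟨c, ?_⟩
  rw [f.map_vadd, f.linear.map_smul]

theorem euclid_I_27 (p q r s t : EuclideanSpace ℝ (Fin 2))
    (hncol : ¬ Collinear ℝ ({p, q, r} : Set (EuclideanSpace ℝ (Fin 2))))
    (ht1 : Sbtw ℝ p t q) (hm1 : dist p t = dist t q)
    (ht2 : Sbtw ℝ r t s) (hm2 : dist r t = dist t s) :
    ¬ ∃ x : EuclideanSpace ℝ (Fin 2),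
      Collinear ℝ ({x, p, r} : Set (EuclideanSpace ℝ (Fin 2))) ∧
      Collinear ℝ ({x, q, s} : Set (EuclideanSpace ℝ (Fin 2))) := by
  rintro ⟨x, hxpr, hxqs⟩
  -- p ≠ r
  have hpr : p ≠ r := by
    rintro rfl
    exact hncol ((collinear_pair ℝ p q).subset (by intro y hy; simp only [Set.mem_insert_iff, Set.mem_singleton_iff] at hy ⊢; tauto))
  -- t is the midpoint of p q
  have hd1 : dist p t + dist t q = dist p q := ht1.wbtw.dist_add_dist
  have htm1 : t = midpoint ℝ p q :=
    eq_midpoint_of_dist_eq_half (by linarith) (by linarith)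
  have hd2 : dist r t + dist t s = dist r s := ht2.wbtw.dist_add_dist
  have htm2 : t = midpoint ℝ r s :=
    eq_midpoint_of_dist_eq_half (by linarith) (by linarith)
  -- point reflection through t
  set σ : EuclideanSpace ℝ (Fin 2) ≃ᵃ[ℝ] EuclideanSpace ℝ (Fin 2) :=
    AffineEquiv.pointReflection ℝ t with hσ
  have hσp : σ p = q := by rw [hσ, htm1]; exact AffineEquiv.pointReflection_midpoint_left p q
  have hσr : σ r = s := by rw [hσ, htm2]; exact AffineEquiv.pointReflection_midpoint_left r s
  have hinv : ∀ y, σ (σ y) = y := fun y => AffineEquiv.pointReflection_involutive ℝ t y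
  have hσq : σ q = p := by rw [← hσp, hinv]
  have hσs : σ s = r := by rw [← hσr, hinv]
  -- image of the second line under σ
  have himg : Collinear ℝ ({σ x, p, r} : Set (EuclideanSpace ℝ (Fin 2))) := by
    have := collinear_image_affine (σ : EuclideanSpace ℝ (Fin 2) →ᵃ[ℝ] EuclideanSpace ℝ (Fin 2)) hxqs
    have heq : (σ : EuclideanSpace ℝ (Fin 2) →ᵃ[ℝ] EuclideanSpace ℝ (Fin 2)) ''
        ({x, q, s} : Set (EuclideanSpace ℝ (Fin 2))) = {σ x, p, r} := by
      simp [Set.image_insert_eq, hσq, hσs]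
    rwa [heq] at this
  -- x and σ x lie on line pr, hence so does their midpoint t
  have hxmem : x ∈ line[ℝ, p, r] :=
    hxpr.mem_affineSpan_of_mem_of_ne (by simp) (by simp) (by simp) hpr
  have hσxmem : σ x ∈ line[ℝ, p, r] :=
    himg.mem_affineSpan_of_mem_of_ne (by simp) (by simp) (by simp) hpr
  have htmem : t ∈ line[ℝ, p, r] := by
    have hmid : midpoint ℝ x (σ x) = t := by
      rw [hσ]
      exact (midpoint_eq_iff).2 rfl
    rw [← hmid, midpoint]
    exact AffineMap.lineMap_mem _ hxmem hσxmem
  -- hence t, p, r are collinear, and with t between p and q this forces p, q, r collinear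
  have htpr : Collinear ℝ ({t, p, r} : Set (EuclideanSpace ℝ (Fin 2))) :=
    collinear_insert_of_mem_affineSpan_pair htmem
  have htpq : Collinear ℝ ({t, p, q} : Set (EuclideanSpace ℝ (Fin 2))) :=
    collinear_insert_of_mem_affineSpan_pair (ht1.wbtw.mem_affineSpan)
  have htp : t ≠ p := ht1.ne_left
  have hrins : Collinear ℝ (insert r ({t, p, q} : Set (EuclideanSpace ℝ (Fin 2)))) := by
    rw [htpq.collinear_insert_iff_of_ne (Set.mem_insert _ _)
      (Set.mem_insert_of_mem _ (Set.mem_insert _ _)) htp]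
    exact htpr.subset (by intro y hy; simp only [Set.mem_insert_iff, Set.mem_singleton_iff] at hy ⊢; tauto)
  exact hncol (hrins.subset (by intro y hy; simp only [Set.mem_insert_iff, Set.mem_singleton_iff] at hy ⊢; tauto))
end

section
/- (Euclid I.35) Parallelograms on the same base and in the same parallels are equal (have equal area): let A, B, C, D, E, F be points of the Euclidean plane with A, B, C noncollinear, D − A = C − B and F − E = C − B (so ABCD and EBCF are parallelograms on base BC), and with E and F collinear with A and D (the tops lie on one line). Then the Lebesgue measure (MeasureTheory.volume) of the convex hull of {A, B, C, D} equals that of the convex hull of {E, B, C, F}. -/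
open MeasureTheory Set Pointwise

lemma para_hull {E : Type*} [NormedAddCommGroup E] [NormedSpace ℝ E] (v w : E) :
    parallelepiped ![v, w] = convexHull ℝ ({0, v, w, v + w} : Set E) := by
  rw [parallelepiped_eq_convexHull]
  congr 1
  rw [Fin.sum_univ_two]
  ext x
  simp only [Matrix.cons_val_zero, Matrix.cons_val_one, Matrix.head_cons, Set.mem_add,
    Set.mem_insert_iff, Set.mem_singleton_iff]
  constructor
  · rintro ⟨a, ha, b, hb, rfl⟩
    rcases ha with rfl | rfl <;> rcases hb with rfl | rfl <;> simp
  · rintro (h | h | h | h)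
    · exact ⟨0, Or.inl rfl, 0, Or.inl rfl, by simp [h]⟩
    · exact ⟨v, Or.inr rfl, 0, Or.inl rfl, by simp [h]⟩
    · exact ⟨0, Or.inl rfl, w, Or.inr rfl, by simp [h]⟩
    · exact ⟨v, Or.inr rfl, w, Or.inr rfl, h.symm⟩

lemma alt_shear {E : Type*} [NormedAddCommGroup E] [NormedSpace ℝ E]
    (ω : E [⋀^Fin 2]→ₗ[ℝ] ℝ) (v w : E) (t : ℝ) :
    ω ![v, w + t • v] = ω ![v, w] := by
  have hu : ∀ x : E, ![v, x] = Function.update ![v, w] 1 x := by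
    intro x; ext i; fin_cases i <;> simp
  rw [hu (w + t • v), ω.map_update_add, ω.map_update_smul, ← hu w, ← hu v,
    ω.map_eq_zero_of_eq ![v, v] (by simp) (show (0 : Fin 2) ≠ 1 by decide)]
  simp [← hu w]

lemma vol_para (B : EuclideanSpace ℝ (Fin 2)) (v w : EuclideanSpace ℝ (Fin 2)) :
    volume (convexHull ℝ ({B, B + v, B + w, B + (v + w)} : Set (EuclideanSpace ℝ (Fin 2)))) =
      ENNReal.ofReal |(EuclideanSpace.basisFun (Fin 2) ℝ).toBasis.det ![v, w]| := by
  have h1 : ({B, B + v, B + w, B + (v + w)} : Set (EuclideanSpace ℝ (Fin 2))) =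
      B +ᵥ ({0, v, w, v + w} : Set (EuclideanSpace ℝ (Fin 2))) := by
    ext x
    simp only [Set.mem_vadd_set, Set.mem_insert_iff, Set.mem_singleton_iff, vadd_eq_add]
    constructor
    · rintro (rfl | rfl | rfl | rfl)
      exacts [⟨0, by simp, by simp⟩, ⟨v, by simp, rfl⟩, ⟨w, by simp, rfl⟩, ⟨v + w, by simp, rfl⟩]
    · rintro ⟨y, (rfl | rfl | rfl | rfl), rfl⟩ <;> simp
  rw [h1, convexHull_vadd, measure_vadd, ← para_hull,
    ← (EuclideanSpace.basisFun (Fin 2) ℝ).addHaar_eq_volume]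
  exact Measure.addHaar_parallelepiped _ _

theorem euclid_I_35 (A B C D E F : EuclideanSpace ℝ (Fin 2))
    (hncol : ¬ Collinear ℝ ({A, B, C} : Set (EuclideanSpace ℝ (Fin 2))))
    (hD : D - A = C - B) (hF : F - E = C - B)
    (htop : Collinear ℝ ({A, D, E, F} : Set (EuclideanSpace ℝ (Fin 2)))) :
    volume (convexHull ℝ ({A, B, C, D} : Set (EuclideanSpace ℝ (Fin 2)))) =
    volume (convexHull ℝ ({E, B, C, F} : Set (EuclideanSpace ℝ (Fin 2)))) := by
  have e1 : B + (C - B) = C := by abel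
  have e2 : B + (A - B) = A := by abel
  have e3 : B + ((C - B) + (A - B)) = D := by
    have h : D = C - B + A := by rw [← hD]; abel
    rw [h]; abel
  have e4 : B + (E - B) = E := by abel
  have e5 : B + ((C - B) + (E - B)) = F := by
    have h : F = C - B + E := by rw [← hF]; abel
    rw [h]; abel
  have hset1 : ({A, B, C, D} : Set (EuclideanSpace ℝ (Fin 2))) =
      {B, B + (C - B), B + (A - B), B + ((C - B) + (A - B))} := by
    rw [e1, e2, e3]; ext x; simp only [Set.mem_insert_iff, Set.mem_singleton_iff]; tauto
  have hset2 : ({E, B, C, F} : Set (EuclideanSpace ℝ (Fin 2))) =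
      {B, B + (C - B), B + (E - B), B + ((C - B) + (E - B))} := by
    rw [e1, e4, e5]; ext x; simp only [Set.mem_insert_iff, Set.mem_singleton_iff]; tauto
  rw [hset1, hset2, vol_para, vol_para]
  -- obtain E - A = t • (C - B)
  have hCB : C - B ≠ 0 := by
    intro h
    apply hncol
    have : C = B := by linear_combination (norm := module) h
    rw [this]
    exact (collinear_pair ℝ A B).subset (by simp [Set.insert_subset_iff])
  obtain ⟨t, ht⟩ : ∃ t : ℝ, E - A = t • (C - B) := by
    rw [collinear_iff_of_mem (show A ∈ ({A, D, E, F} : Set _) by simp)] at htop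
    obtain ⟨v, hv⟩ := htop
    obtain ⟨rd, hrd⟩ := hv D (by simp)
    obtain ⟨re, hre⟩ := hv E (by simp)
    have hDv : rd • v = C - B := by
      rw [← hD, hrd]; simp [vadd_eq_add]
    have hrd0 : rd ≠ 0 := by
      intro h; rw [h, zero_smul] at hDv; exact hCB hDv.symm
    refine ⟨re / rd, ?_⟩
    rw [hre, ← hDv]
    simp [vadd_eq_add, smul_smul, div_mul_cancel₀ _ hrd0]
  have hEB : E - B = (A - B) + t • (C - B) := by
    rw [← ht]; abel
  rw [hEB, alt_shear]
end
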